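/- Let N ≥ 1, let r ∈ ℝ^N with r ≠ 0, let λ ∈ ℝ, and let Λ be a real N×N positive semidefinite matrix with Λ.mulVec r = 0. Suppose the spectral gap condition holds: ⟪x, Λ.mulVec x⟫ > λ‖x‖² for every nonzero x ∈ ℝ^N with ⟪x, r⟫ = 0 (i.e., the smallest nonzero eigenvalue λ₁(Λ) exceeds λ). Set M := λ • (I − (r rᵀ)/‖r‖²) − Λ, where r rᵀ is the outer-product matrix and I the identity. Then −M is positive semidefinite, and M.mulVec x = 0 if and only if x = t • r for some t ∈ ℝ (so M has rank N − 1). -/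

import Mathlib

/-!
Write `x = p + t r` with `p ⊥ r`. Since `Λ` is symmetric and kills `r`, the quadratic form of
`M = λ(I - rrᵀ/‖r‖²) - Λ` only sees the orthogonal part: `⟪x, Mx⟫ = λ‖p‖² - ⟪p, Λp⟫`, which the
spectral gap makes `≤ 0`, and `< 0` unless `p = 0`. Hence `-M ⪰ 0`, and `Mx = 0` gives
`⟪x, Mx⟫ = 0`, so `p = 0`, i.e. `x ∈ ℝr`. Rank–nullity then gives the rank.
-/

open Matrix

variable {n : Type*} [Fintype n] {r : n → ℝ} {Λ : Matrix n n ℝ}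

theorem dotProduct_self_pos (hr : r ≠ 0) : 0 < r ⬝ᵥ r := by
  simpa using dotProduct_star_self_pos_iff.mpr hr

theorem exists_eq_add_smul_of_dotProduct_eq_zero (hr : r ≠ 0) (x : n → ℝ) :
    ∃ p : n → ℝ, ∃ t : ℝ, p ⬝ᵥ r = 0 ∧ x = p + t • r := by
  refine ⟨x - ((r ⬝ᵥ r)⁻¹ * (r ⬝ᵥ x)) • r, (r ⬝ᵥ r)⁻¹ * (r ⬝ᵥ x), ?_, by simp⟩
  rw [sub_dotProduct, smul_dotProduct, smul_eq_mul, dotProduct_comm x r, mul_comm _ (r ⬝ᵥ r),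
    mul_inv_cancel_left₀ (dotProduct_self_pos hr).ne', sub_self]

theorem one_sub_smul_vecMulVec_mulVec_add_smul [DecidableEq n] (hr : r ≠ 0) {p : n → ℝ}
    (hp : p ⬝ᵥ r = 0) (t : ℝ) :
    (1 - (r ⬝ᵥ r)⁻¹ • vecMulVec r r) *ᵥ (p + t • r) = p := by
  rw [sub_mulVec, one_mulVec, smul_mulVec, vecMulVec_mulVec, op_smul_eq_smul, dotProduct_add,
    dotProduct_comm r p, hp, dotProduct_smul, smul_eq_mul, zero_add, smul_smul, mul_comm t,
    inv_mul_cancel_left₀ (dotProduct_self_pos hr).ne', add_sub_cancel_right]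

theorem dotProduct_mulVec_eq_zero_of_mulVec_eq_zero (hΛ : Λ.IsHermitian) (hΛr : Λ *ᵥ r = 0)
    (x : n → ℝ) : r ⬝ᵥ Λ *ᵥ x = 0 := by
  rw [dotProduct_mulVec, ← mulVec_transpose, ← conjTranspose_eq_transpose_of_trivial, hΛ, hΛr,
    zero_dotProduct]

theorem rank_eq_card_sub_one_of_mulVec_eq_zero_iff {K : Type*} [Field K] {A : Matrix n n K}
    {v : n → K} (hv : v ≠ 0) (hker : ∀ x, A *ᵥ x = 0 ↔ ∃ t : K, x = t • v) :
    A.rank = Fintype.card n - 1 := by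
  have hspan : LinearMap.ker A.mulVecLin = K ∙ v := by
    ext x
    simp only [LinearMap.mem_ker, mulVecLin_apply, Submodule.mem_span_singleton, hker, eq_comm]
  have := LinearMap.finrank_range_add_finrank_ker A.mulVecLin
  rw [hspan, finrank_span_singleton hv, Module.finrank_fintype_fun_eq_card] at this
  rw [rank, ← this, Nat.add_sub_cancel]

variable [DecidableEq n]

/-- The linearization of the normalized flow `ṙ = λ r - K` at `r`, where `Λ = ∂K/∂r`. -/
noncomputable def linearization (lam : ℝ) (r : n → ℝ) (Λ : Matrix n n ℝ) : Matrix n n ℝ :=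
  lam • (1 - (r ⬝ᵥ r)⁻¹ • vecMulVec r r) - Λ

theorem isHermitian_linearization (lam : ℝ) (r : n → ℝ) (hΛ : Λ.IsHermitian) :
    (linearization lam r Λ).IsHermitian := by
  have hrr : (vecMulVec r r).IsHermitian := by
    simpa using (posSemidef_vecMulVec_self_star r).isHermitian
  exact ((isHermitian_one.sub (hrr.smul (IsSelfAdjoint.all _))).smul
    (IsSelfAdjoint.all _)).sub hΛ

theorem linearization_mulVec_add_smul (lam : ℝ) (hr : r ≠ 0) (hΛr : Λ *ᵥ r = 0) {p : n → ℝ}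
    (hp : p ⬝ᵥ r = 0) (t : ℝ) :
    linearization lam r Λ *ᵥ (p + t • r) = lam • p - Λ *ᵥ p := by
  rw [linearization, sub_mulVec, smul_mulVec, one_sub_smul_vecMulVec_mulVec_add_smul hr hp,
    mulVec_add, mulVec_smul, hΛr, smul_zero, add_zero]

theorem dotProduct_linearization_mulVec_add_smul (lam : ℝ) (hr : r ≠ 0) (hΛ : Λ.IsHermitian)
    (hΛr : Λ *ᵥ r = 0) {p : n → ℝ} (hp : p ⬝ᵥ r = 0) (t : ℝ) :
    (p + t • r) ⬝ᵥ linearization lam r Λ *ᵥ (p + t • r) = lam * (p ⬝ᵥ p) - p ⬝ᵥ Λ *ᵥ p := by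
  rw [linearization_mulVec_add_smul lam hr hΛr hp, add_dotProduct, smul_dotProduct,
    dotProduct_sub, dotProduct_sub, dotProduct_smul, dotProduct_smul, dotProduct_comm r p, hp,
    dotProduct_mulVec_eq_zero_of_mulVec_eq_zero hΛ hΛr]
  simp

theorem posSemidef_neg_linearization (lam : ℝ) (hr : r ≠ 0) (hΛ : Λ.IsHermitian)
    (hΛr : Λ *ᵥ r = 0) (hgap : ∀ p : n → ℝ, p ⬝ᵥ r = 0 → lam * (p ⬝ᵥ p) ≤ p ⬝ᵥ Λ *ᵥ p) :
    (-linearization lam r Λ).PosSemidef := by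
  refine posSemidef_iff_dotProduct_mulVec.mpr ⟨(isHermitian_linearization lam r hΛ).neg, ?_⟩
  intro x
  obtain ⟨p, t, hp, rfl⟩ := exists_eq_add_smul_of_dotProduct_eq_zero hr x
  have := dotProduct_linearization_mulVec_add_smul lam hr hΛ hΛr hp t
  simp only [star_trivial, neg_mulVec, dotProduct_neg]
  linarith [hgap p hp]

theorem linearization_mulVec_eq_zero_iff (lam : ℝ) (hr : r ≠ 0) (hΛ : Λ.IsHermitian)
    (hΛr : Λ *ᵥ r = 0)
    (hgap : ∀ p : n → ℝ, p ≠ 0 → p ⬝ᵥ r = 0 → lam * (p ⬝ᵥ p) < p ⬝ᵥ Λ *ᵥ p) (x : n → ℝ) :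
    linearization lam r Λ *ᵥ x = 0 ↔ ∃ t : ℝ, x = t • r := by
  obtain ⟨p, t, hp, rfl⟩ := exists_eq_add_smul_of_dotProduct_eq_zero hr x
  constructor
  · intro hx
    have hquad := dotProduct_linearization_mulVec_add_smul lam hr hΛ hΛr hp t
    rw [hx, dotProduct_zero] at hquad
    obtain rfl : p = 0 := by
      by_contra hp0
      linarith [hgap p hp0 hp]
    exact ⟨t, zero_add _⟩
  · rintro ⟨s, hs⟩
    rw [hs, ← zero_add (s • r), linearization_mulVec_add_smul lam hr hΛr (zero_dotProduct r)]
    simp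

theorem stmt_9_general {N : ℕ} (r : Fin N → ℝ) (hr : r ≠ 0)
    (lam : ℝ)
    (Λ : Matrix (Fin N) (Fin N) ℝ) (hΛ : Λ.PosSemidef) (hΛr : Λ.mulVec r = 0)
    (hgap : ∀ x : Fin N → ℝ, x ≠ 0 → x ⬝ᵥ r = 0 → lam * (x ⬝ᵥ x) < x ⬝ᵥ Λ.mulVec x)
    (M : Matrix (Fin N) (Fin N) ℝ)
    (hM : M = lam • ((1 : Matrix (Fin N) (Fin N) ℝ) - (r ⬝ᵥ r)⁻¹ • vecMulVec r r) - Λ) :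
    (-M).PosSemidef ∧ (∀ x : Fin N → ℝ, M.mulVec x = 0 ↔ ∃ t : ℝ, x = t • r) ∧
      M.rank = N - 1 := by
  change M = linearization lam r Λ at hM
  subst hM
  have hgap_le : ∀ p : Fin N → ℝ, p ⬝ᵥ r = 0 → lam * (p ⬝ᵥ p) ≤ p ⬝ᵥ Λ *ᵥ p := by
    intro p hp
    rcases eq_or_ne p 0 with rfl | hp0
    · simp
    · exact (hgap p hp0 hp).le
  have hker := linearization_mulVec_eq_zero_iff lam hr hΛ.1 hΛr hgap
  refine ⟨posSemidef_neg_linearization lam hr hΛ.1 hΛr hgap_le, hker, ?_⟩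
  simpa using rank_eq_card_sub_one_of_mulVec_eq_zero_iff hr hker

/-- Linearization of the normalized second-order flow at a DQE-metric under the spectral
gap condition `λ₁(Λ) > λ`: if `Λ` is positive semidefinite with `Λ r = 0` and
`⟪x, Λx⟫ > λ‖x‖²` for every nonzero `x ⊥ r`, then `M = λ(I - rrᵀ/‖r‖²) - Λ` satisfies:
`-M` is positive semidefinite and the kernel of `M` is exactly the span of `r`
(so `M` has rank `N - 1`). -/
theorem stmt_9 {N : ℕ} (hN : 1 ≤ N) (r : Fin N → ℝ) (hr : r ≠ 0)
    (lam : ℝ)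
    (Λ : Matrix (Fin N) (Fin N) ℝ) (hΛ : Λ.PosSemidef) (hΛr : Λ.mulVec r = 0)
    (hgap : ∀ x : Fin N → ℝ, x ≠ 0 → x ⬝ᵥ r = 0 → lam * (x ⬝ᵥ x) < x ⬝ᵥ Λ.mulVec x)
    (M : Matrix (Fin N) (Fin N) ℝ)
    (hM : M = lam • ((1 : Matrix (Fin N) (Fin N) ℝ) - (r ⬝ᵥ r)⁻¹ • vecMulVec r r) - Λ) :
    (-M).PosSemidef ∧ (∀ x : Fin N → ℝ, M.mulVec x = 0 ↔ ∃ t : ℝ, x = t • r) ∧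
      M.rank = N - 1 :=
  stmt_9_general r hr lam Λ hΛ hΛr hgap M hM
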